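/- For 0 < α < π, the integral over φ from 0 to α of (1 + (2/π)[√((1 + cos α)/(cos φ − cos α)) − arctan(√((1 + cos α)/(cos φ − cos α)))]) · sin φ dφ equals (2/π)(sin α + α). -/

import Mathlib

/-!
Substituting `t = cos φ - cos α` turns the integral into `∫₀^{1 - cos α}` of
`1 + (2/π) (√(a/t) - arctan √(a/t))` with `a = 1 + cos α`. Since
`arctan √(a/t) = π/2 - arctan √(t/a)`, the function `t ↦ arctan √(a/t) - √(a/t)` has the primitive
`π t / 2 - (a + t) arctan √(t/a) - √(a t)`, which is continuous down to `t = 0` although the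
integrand is not bounded there. At `t = 1 - cos α` the half-angle formula gives
`arctan √(t/a) = α/2` and `√(a t) = sin α`. The integrand is nonnegative, so it is integrable and
the fundamental theorem of calculus applies.
-/

open Real Set intervalIntegral

lemma arctan_le_self {x : ℝ} (hx : 0 ≤ x) : arctan x ≤ x := by
  simpa only [tan_arctan] using le_tan (arctan_nonneg.2 hx) (arctan_lt_pi_div_two x)

lemma arctan_sqrt_div_eq_pi_div_two_sub {a t : ℝ} (ha : 0 < a) (ht : 0 < t) :
    arctan √(a / t) = π / 2 - arctan √(t / a) := by
  rw [← arctan_inv_of_pos (sqrt_pos.2 (div_pos ht ha)), ← sqrt_inv, inv_div]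

lemma arctan_sqrt_one_sub_cos_div_one_add_cos {x : ℝ} (hx₀ : 0 ≤ x) (hx₁ : x < π) :
    arctan √((1 - cos x) / (1 + cos x)) = x / 2 := by
  have hcos : 0 < cos (x / 2) := cos_pos_of_mem_Ioo ⟨by linarith [pi_pos], by linarith⟩
  have htan : (1 - cos x) / (1 + cos x) = tan (x / 2) ^ 2 := by
    rw [tan_eq_sin_div_cos, div_pow, show x = 2 * (x / 2) by ring, cos_two_mul, sin_sq]
    field_simp
    ring
  rw [htan, sqrt_sq (tan_nonneg_of_nonneg_of_le_pi_div_two (by linarith) (by linarith)),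
    arctan_tan (by linarith [pi_pos]) (by linarith)]

noncomputable def arctanSqrtPrimitive (a t : ℝ) : ℝ :=
  π / 2 * t - (a + t) * arctan √(t / a) - √(a * t)

lemma continuous_arctanSqrtPrimitive (a : ℝ) : Continuous (arctanSqrtPrimitive a) := by
  unfold arctanSqrtPrimitive
  fun_prop

lemma arctanSqrtPrimitive_zero (a : ℝ) : arctanSqrtPrimitive a 0 = 0 := by
  simp [arctanSqrtPrimitive]

lemma hasDerivAt_arctanSqrtPrimitive {a t : ℝ} (ha : 0 < a) (ht : 0 < t) :
    HasDerivAt (arctanSqrtPrimitive a) (arctan √(a / t) - √(a / t)) t := by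
  have hquot : HasDerivAt (fun t => √(t / a)) (1 / a / (2 * √(t / a))) t :=
    ((hasDerivAt_id' t).div_const a).sqrt (div_pos ht ha).ne'
  have hprod : HasDerivAt (fun t => √(a * t)) (a * 1 / (2 * √(a * t))) t :=
    ((hasDerivAt_id' t).const_mul a).sqrt (mul_pos ha ht).ne'
  refine ((((hasDerivAt_id' t).const_mul (π / 2)).sub
    (((hasDerivAt_id' t).const_add a).mul hquot.arctan)).sub hprod).congr_deriv ?_
  rw [arctan_sqrt_div_eq_pi_div_two_sub ha ht, sqrt_div ha.le, sqrt_div ht.le, sqrt_mul ha.le]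
  have hs := sq_sqrt ht.le
  have hr := sq_sqrt ha.le
  have hs₀ : 0 < √t := sqrt_pos.2 ht
  have hr₀ : 0 < √a := sqrt_pos.2 ha
  simp only [div_pow, hs, hr]
  field_simp
  linear_combination hr

lemma arctanSqrtPrimitive_one_add_cos_one_sub_cos {α : ℝ} (hα₀ : 0 < α) (hα₁ : α < π) :
    arctanSqrtPrimitive (1 + cos α) (1 - cos α) = π / 2 * (1 - cos α) - α - sin α := by
  have hsin : √((1 + cos α) * (1 - cos α)) = sin α := by
    rw [sin_eq_sqrt_one_sub_cos_sq hα₀.le hα₁.le]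
    congr 1
    ring
  rw [arctanSqrtPrimitive, arctan_sqrt_one_sub_cos_div_one_add_cos hα₀.le hα₁, hsin]
  ring

lemma hasDerivAt_neg_cos_add_arctanSqrtPrimitive {a c φ : ℝ} (ha : 0 < a) (hφ : c < cos φ) :
    HasDerivAt (fun φ => -cos φ + 2 / π * arctanSqrtPrimitive a (cos φ - c))
      ((1 + 2 / π * (√(a / (cos φ - c)) - arctan √(a / (cos φ - c)))) * sin φ) φ := by
  refine ((hasDerivAt_cos φ).neg.add
    (((hasDerivAt_arctanSqrtPrimitive ha (sub_pos.2 hφ)).comp φ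
      ((hasDerivAt_cos φ).sub_const c)).const_mul (2 / π))).congr_deriv ?_
  ring

theorem integral_combined (α : ℝ) (hα₀ : 0 < α) (hα₁ : α < π) :
    ∫ φ in (0:ℝ)..α,
      (1 + (2 / π) * (Real.sqrt ((1 + Real.cos α) / (Real.cos φ - Real.cos α))
        - Real.arctan (Real.sqrt ((1 + Real.cos α) / (Real.cos φ - Real.cos α)))))
        * Real.sin φ
      = (2 / π) * (Real.sin α + α) := by
  have ha : 0 < 1 + cos α := by
    linarith [cos_pi ▸ cos_lt_cos_of_nonneg_of_le_pi hα₀.le le_rfl hα₁]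
  have hcos : ∀ φ ∈ Ioo 0 α, cos α < cos φ := fun φ hφ =>
    cos_lt_cos_of_nonneg_of_le_pi hφ.1.le hα₁.le hφ.2
  have hcont : ContinuousOn
      (fun φ => -cos φ + 2 / π * arctanSqrtPrimitive (1 + cos α) (cos φ - cos α)) (Icc 0 α) := by
    have := continuous_arctanSqrtPrimitive (1 + cos α)
    fun_prop
  have hderiv := fun φ hφ => hasDerivAt_neg_cos_add_arctanSqrtPrimitive ha (hcos φ hφ)
  have hnonneg : ∀ φ ∈ Ioo 0 α, 0 ≤ (1 + 2 / π * (√((1 + cos α) / (cos φ - cos α))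
      - arctan √((1 + cos α) / (cos φ - cos α)))) * sin φ := fun φ hφ => by
    have hgap := sub_nonneg.2 (arctan_le_self (sqrt_nonneg ((1 + cos α) / (cos φ - cos α))))
    have hsin := sin_nonneg_of_nonneg_of_le_pi hφ.1.le (hφ.2.trans hα₁).le
    have hπ := pi_pos
    positivity
  rw [integral_eq_sub_of_hasDerivAt_of_le hα₀.le hcont hderiv
    ((intervalIntegrable_iff_integrableOn_Ioc_of_le hα₀.le).2
      (integrableOn_deriv_of_nonneg hcont hderiv hnonneg))]
  simp only [sub_self, cos_zero, arctanSqrtPrimitive_zero,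
    arctanSqrtPrimitive_one_add_cos_one_sub_cos hα₀ hα₁]
  field_simp
  ring
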